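/- arXiv:2312.15351 — 4 statements merged into one kernel-verified Lean document; each statement's English description precedes it below -/
import Mathlib

section
/- Let T₁, T₂ be positive invertible bounded operators on H, and let p, q, r, s be real numbers with p + q = 1 and r + s = 1. Then bounded operators S, U on H satisfy U T₁ S* = T₂ if and only if there exist bounded operators Q, P on H with Q P* = Id such that S = T₂^s P T₁^{-q} and U = T₂^r Q T₁^{-p}. -/
open scoped InnerProductSpace

/-- The power `T^t` of a (positive) bounded operator, via the continuous functional
calculus applied to the real power function. -/
noncomputable def opPow {H : Type*} [NormedAddCommGroup H] [InnerProductSpace ℂ H]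
    [CompleteSpace H] (T : H →L[ℂ] H) (t : ℝ) : H →L[ℂ] H :=
  cfc (fun x : ℝ => x ^ t) T

section Aux

variable {H : Type*} [NormedAddCommGroup H] [InnerProductSpace ℂ H] [CompleteSpace H]

lemma spec_pos {T : H →L[ℂ] H} (hT : T.IsPositive) (hinv : IsUnit T) :
    ∀ x ∈ spectrum ℝ T, 0 < x := by
  intro x hx
  have h0 : (0:H →L[ℂ] H) ≤ T := (ContinuousLinearMap.nonneg_iff_isPositive T).mpr hT
  have := spectrum_nonneg_of_nonneg h0 hx
  rcases this.lt_or_eq with h | h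
  · exact h
  · exact absurd (h ▸ hx) (spectrum.zero_notMem ℝ hinv)

lemma opPow_sa {T : H →L[ℂ] H} (t : ℝ) : IsSelfAdjoint (opPow T t) :=
  cfc_predicate _ T

lemma opPow_cont {T : H →L[ℂ] H} (hT : T.IsPositive) (hinv : IsUnit T) (t : ℝ) :
    ContinuousOn (fun x : ℝ => x ^ t) (spectrum ℝ T) := fun x hx =>
  (Real.continuousAt_rpow_const x t (Or.inl (spec_pos hT hinv x hx).ne')).continuousWithinAt

lemma opPow_add {T : H →L[ℂ] H} (hT : T.IsPositive) (hinv : IsUnit T) (a b : ℝ) :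
    opPow T a * opPow T b = opPow T (a + b) := by
  rw [opPow, opPow, ← cfc_mul _ _ T (opPow_cont hT hinv a) (opPow_cont hT hinv b)]
  exact cfc_congr fun x hx => (Real.rpow_add (spec_pos hT hinv x hx) a b).symm

lemma opPow_one {T : H →L[ℂ] H} (hT : T.IsPositive) : opPow T 1 = T := by
  rw [opPow]
  have : cfc (fun x : ℝ => x ^ (1:ℝ)) T = cfc (fun x : ℝ => x) T :=
    cfc_congr fun x _ => Real.rpow_one x
  rw [this, cfc_id' ℝ T hT.isSelfAdjoint]

lemma opPow_zero {T : H →L[ℂ] H} (hT : T.IsPositive) : opPow T 0 = 1 := by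
  rw [opPow]
  have : cfc (fun x : ℝ => x ^ (0:ℝ)) T = cfc (1 : ℝ → ℝ) T :=
    cfc_congr fun x _ => Real.rpow_zero x
  rw [this, cfc_one ℝ T hT.isSelfAdjoint]

end Aux

/-- Let `T₁, T₂` be positive invertible bounded operators and `p + q = 1`, `r + s = 1`.
Then `U T₁ S* = T₂` iff there exist `Q, P` with `Q P* = 1`, `S = T₂^s P T₁^{-q}` and
`U = T₂^r Q T₁^{-p}`. -/
theorem factorization_lemma
    {H : Type*} [NormedAddCommGroup H] [InnerProductSpace ℂ H] [CompleteSpace H]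
    (T₁ T₂ : H →L[ℂ] H) (hT₁ : T₁.IsPositive) (hT₂ : T₂.IsPositive)
    (hT₁inv : IsUnit T₁) (hT₂inv : IsUnit T₂)
    (p q r s : ℝ) (hpq : p + q = 1) (hrs : r + s = 1)
    (S U : H →L[ℂ] H) :
    U * T₁ * ContinuousLinearMap.adjoint S = T₂ ↔
      ∃ Q P : H →L[ℂ] H, Q * ContinuousLinearMap.adjoint P = 1 ∧
        S = opPow T₂ s * P * opPow T₁ (-q) ∧
        U = opPow T₂ r * Q * opPow T₁ (-p) := by
  have hA := opPow_add hT₁ hT₁inv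
  have hB := opPow_add hT₂ hT₂inv
  constructor
  · intro h
    refine ⟨opPow T₂ (-r) * U * opPow T₁ p, opPow T₂ (-s) * S * opPow T₁ q, ?_, ?_, ?_⟩
    · rw [← ContinuousLinearMap.star_eq_adjoint]
      simp only [star_mul, (opPow_sa _).star_eq, ContinuousLinearMap.star_eq_adjoint,
        ← mul_assoc]
      rw [mul_assoc (opPow T₂ (-r) * U), hA, hpq, opPow_one hT₁,
        mul_assoc (opPow T₂ (-r)) U T₁, mul_assoc (opPow T₂ (-r)) (U * T₁), h]
      calc opPow T₂ (-r) * T₂ * opPow T₂ (-s)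
          = opPow T₂ (-r) * opPow T₂ 1 * opPow T₂ (-s) := by rw [opPow_one hT₂]
        _ = opPow T₂ (-r + 1 + -s) := by rw [hB, hB]
        _ = 1 := by rw [show -r + 1 + -s = 0 by linarith, opPow_zero hT₂]
    · simp only [← mul_assoc]
      rw [hB, show s + -s = 0 by ring, opPow_zero hT₂, one_mul,
        mul_assoc S, hA, show q + -q = 0 by ring, opPow_zero hT₁, mul_one]
    · simp only [← mul_assoc]
      rw [hB, show r + -r = 0 by ring, opPow_zero hT₂, one_mul,
        mul_assoc U, hA, show p + -p = 0 by ring, opPow_zero hT₁, mul_one]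
  · rintro ⟨Q, P, hQP, rfl, rfl⟩
    rw [← ContinuousLinearMap.star_eq_adjoint]
    simp only [star_mul, (opPow_sa _).star_eq, ContinuousLinearMap.star_eq_adjoint,
      ← mul_assoc]
    have hmid : opPow T₁ (-p) * T₁ * opPow T₁ (-q) = 1 := by
      calc opPow T₁ (-p) * T₁ * opPow T₁ (-q)
          = opPow T₁ (-p) * opPow T₁ 1 * opPow T₁ (-q) := by rw [opPow_one hT₁]
        _ = opPow T₁ (-p + 1 + -q) := by rw [hA, hA]
        _ = 1 := by rw [show -p + 1 + -q = 0 by linarith, opPow_zero hT₁]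
    rw [mul_assoc (opPow T₂ r * Q) (opPow T₁ (-p)) T₁,
      mul_assoc (opPow T₂ r * Q) (opPow T₁ (-p) * T₁) (opPow T₁ (-q)),
      hmid, mul_one,
      mul_assoc (opPow T₂ r) Q (ContinuousLinearMap.adjoint P), hQP, mul_one,
      hB, hrs, opPow_one hT₂]
end

section
/- In ℝ², let ξ₁ = (1,2), ξ₂ = (3,4), η₁ = (1,1), η₂ = (1,-1). The operator S(x) = ⟨x, ξ₁⟩η₁ + ⟨x, ξ₂⟩η₂ is invertible, but there is a nonzero vector v ∈ ℝ² with ⟨v, ξ₁⟩⟨η₁, v⟩ + ⟨v, ξ₂⟩⟨η₂, v⟩ = 0; hence ({ξ₁, ξ₂}, {η₁, η₂}) is a pair frame but not a biframe. -/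
open scoped InnerProductSpace

/-!
If `ξ` spans and `η` is linearly independent, then `S x = ∑ ⟪ξᵢ, x⟫ ηᵢ` vanishes only when
every `⟪ξᵢ, x⟫` does, i.e. when `x = 0`; an injective endomorphism of a finite-dimensional space
is bijective. Both pairs here have nonzero determinant, so `S` is invertible. In coordinates the
quadratic form `Q x = ∑ ⟪x, ξᵢ⟫⟪ηᵢ, x⟫` is `4a² + 4ab - 2b²`, which is indefinite and vanishes
at `(a, b) = (√3 - 1, 2)`, ruling out a lower biframe bound.
-/

section

variable {𝕜 E ι : Type*} [RCLike 𝕜] [NormedAddCommGroup E] [InnerProductSpace 𝕜 E]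

theorem eq_zero_of_inner_eq_zero_of_span_eq_top {ξ : ι → E}
    (hξ : Submodule.span 𝕜 (Set.range ξ) = ⊤) {x : E} (hx : ∀ i, ⟪ξ i, x⟫_𝕜 = 0) : x = 0 := by
  have hle : Submodule.span 𝕜 (Set.range ξ) ≤ (𝕜 ∙ x)ᗮ := by
    rw [Submodule.span_le]
    rintro _ ⟨i, rfl⟩
    exact Submodule.mem_orthogonal_singleton_iff_inner_right.mpr (inner_eq_zero_symm.mp (hx i))
  have hx' : x ∈ (𝕜 ∙ x)ᗮ := hle (hξ ▸ Submodule.mem_top)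
  exact inner_self_eq_zero.mp (Submodule.mem_orthogonal_singleton_iff_inner_right.mp hx')

variable [Fintype ι]

variable (𝕜) in
def pairFrameOperator (ξ η : ι → E) : E →ₗ[𝕜] E :=
  ∑ i, (innerₛₗ 𝕜 (ξ i)).smulRight (η i)

@[simp]
theorem pairFrameOperator_apply (ξ η : ι → E) (x : E) :
    pairFrameOperator 𝕜 ξ η x = ∑ i, ⟪ξ i, x⟫_𝕜 • η i := by
  simp [pairFrameOperator]

theorem pairFrameOperator_bijective {ξ η : ι → E}
    (hξ : Submodule.span 𝕜 (Set.range ξ) = ⊤) (hη : LinearIndependent 𝕜 η) :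
    Function.Bijective (pairFrameOperator 𝕜 ξ η) := by
  have : FiniteDimensional 𝕜 E := ⟨hξ ▸ Submodule.fg_span (Set.finite_range ξ)⟩
  have hinj : Function.Injective (pairFrameOperator 𝕜 ξ η) := by
    rw [← LinearMap.ker_eq_bot, LinearMap.ker_eq_bot']
    intro x hx
    rw [pairFrameOperator_apply] at hx
    exact eq_zero_of_inner_eq_zero_of_span_eq_top hξ (Fintype.linearIndependent_iff.mp hη _ hx)
  exact ⟨hinj, LinearMap.injective_iff_surjective.mp hinj⟩

end

section

local notation "ℝ²" => EuclideanSpace ℝ (Fin 2)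

theorem inner_toLp_pair_left (a b : ℝ) (x : ℝ²) : ⟪!₂[a, b], x⟫_ℝ = a * x 0 + b * x 1 := by
  simp [PiLp.inner_apply, Fin.sum_univ_two, mul_comm]

theorem linearIndependent_pair_of_det_ne_zero {a b c d : ℝ} (h : a * d - b * c ≠ 0) :
    LinearIndependent ℝ (![!₂[a, b], !₂[c, d]] : Fin 2 → ℝ²) := by
  rw [LinearIndependent.pair_iff]
  intro s t hst
  have h0 := congrArg (· 0) hst
  have h1 := congrArg (· 1) hst
  simp only [PiLp.add_apply, PiLp.smul_apply, PiLp.zero_apply, smul_eq_mul,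
    Matrix.cons_val_zero, Matrix.cons_val_one] at h0 h1
  constructor
  · have : s * (a * d - b * c) = 0 := by linear_combination d * h0 - c * h1
    simpa [h] using this
  · have : t * (a * d - b * c) = 0 := by linear_combination a * h1 - b * h0
    simpa [h] using this

end

/-- In `ℝ²`, with `ξ₁ = (1,2)`, `ξ₂ = (3,4)`, `η₁ = (1,1)`, `η₂ = (1,-1)`:
the operator `S x = ⟨x, ξ₁⟩η₁ + ⟨x, ξ₂⟩η₂` is invertible (bijective), but there is a
nonzero `v` with `⟨v, ξ₁⟩⟨η₁, v⟩ + ⟨v, ξ₂⟩⟨η₂, v⟩ = 0`; so the pair is a pair frame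
but not a biframe. -/
theorem pair_frame_not_biframe :
    let E := EuclideanSpace ℝ (Fin 2)
    let ξ₁ : E := (WithLp.equiv 2 (Fin 2 → ℝ)).symm ![1, 2]
    let ξ₂ : E := (WithLp.equiv 2 (Fin 2 → ℝ)).symm ![3, 4]
    let η₁ : E := (WithLp.equiv 2 (Fin 2 → ℝ)).symm ![1, 1]
    let η₂ : E := (WithLp.equiv 2 (Fin 2 → ℝ)).symm ![1, -1]
    Function.Bijective (fun x : E => ⟪ξ₁, x⟫_ℝ • η₁ + ⟪ξ₂, x⟫_ℝ • η₂) ∧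
      ∃ v : E, v ≠ 0 ∧ ⟪ξ₁, v⟫_ℝ * ⟪v, η₁⟫_ℝ + ⟪ξ₂, v⟫_ℝ * ⟪v, η₂⟫_ℝ = 0 := by
  intro E ξ₁ ξ₂ η₁ η₂
  have hξ : Submodule.span ℝ (Set.range ![ξ₁, ξ₂]) = ⊤ :=
    (linearIndependent_pair_of_det_ne_zero (by norm_num)).span_eq_top_of_card_eq_finrank
      (by simp)
  have hS : (fun x : E => ⟪ξ₁, x⟫_ℝ • η₁ + ⟪ξ₂, x⟫_ℝ • η₂) =
      pairFrameOperator ℝ ![ξ₁, ξ₂] ![η₁, η₂] := by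
    ext1 x
    simp [Fin.sum_univ_two]
  refine ⟨hS ▸ pairFrameOperator_bijective hξ (linearIndependent_pair_of_det_ne_zero (by norm_num)),
    !₂[√3 - 1, 2], fun hv => by simpa using congrArg (· 1) hv, ?_⟩
  have hs : √3 ^ 2 = 3 := Real.sq_sqrt (by norm_num)
  simp only [ξ₁, ξ₂, η₁, η₂, E, WithLp.equiv_symm_apply, inner_toLp_pair_left,
    Matrix.cons_val_zero, Matrix.cons_val_one]
  linear_combination 4 * hs
end

section
/- Suppose ({ξᵢ}, {ηᵢ}) is a biframe for H with invertible biframe operator S, and suppose there exists a bounded, bounded-below, surjective operator Θ on H with ξᵢ = Θ eᵢ for an orthonormal basis {eᵢ}. Then the operator U = S (Θ*)⁻¹ satisfies U eᵢ = ηᵢ for all i; consequently, if {ξᵢ} is a Riesz basis for H then so is {ηᵢ}. -/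
open scoped InnerProductSpace

/-- If `({ξᵢ}, {ηᵢ})` is a biframe with invertible biframe operator `S`, and `Θ` is a
bounded invertible operator with `Θ eᵢ = ξᵢ` for an orthonormal basis `{eᵢ}`, then
`U = S (Θ*)⁻¹` satisfies `U eᵢ = ηᵢ`; consequently `{ηᵢ}` is a Riesz basis (the image
of an orthonormal basis under a bounded invertible operator). -/
theorem riesz_basis_transfers
    {H : Type*} [NormedAddCommGroup H] [InnerProductSpace ℂ H] [CompleteSpace H]
    (e : HilbertBasis ℕ ℂ H) (ξ η : ℕ → H)
    (S Sinv Θ Θinv : H →L[ℂ] H)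
    (hS : ∀ x : H, HasSum (fun i => ⟪ξ i, x⟫_ℂ • η i) (S x))
    (hSinv₁ : S ∘L Sinv = ContinuousLinearMap.id ℂ H)
    (hSinv₂ : Sinv ∘L S = ContinuousLinearMap.id ℂ H)
    (hΘinv₁ : Θ ∘L Θinv = ContinuousLinearMap.id ℂ H)
    (hΘinv₂ : Θinv ∘L Θ = ContinuousLinearMap.id ℂ H)
    (hΘ : ∀ i, Θ (e i) = ξ i) :
    (∀ i, (S ∘L ContinuousLinearMap.adjoint Θinv) (e i) = η i) ∧
      ∃ V Vinv : H →L[ℂ] H,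
        V ∘L Vinv = ContinuousLinearMap.id ℂ H ∧
        Vinv ∘L V = ContinuousLinearMap.id ℂ H ∧
        ∀ i, V (e i) = η i := by
  have key : ∀ i, (S ∘L ContinuousLinearMap.adjoint Θinv) (e i) = η i := by
    intro i
    have h1 := hS (ContinuousLinearMap.adjoint Θinv (e i))
    have h2 : ∀ j, ⟪ξ j, ContinuousLinearMap.adjoint Θinv (e i)⟫_ℂ
        = if j = i then (1 : ℂ) else 0 := by
      intro j
      rw [ContinuousLinearMap.adjoint_inner_right]
      have : Θinv (ξ j) = e j := by
        rw [← hΘ j, ← ContinuousLinearMap.comp_apply, hΘinv₂,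
          ContinuousLinearMap.id_apply]
      rw [this]
      have := e.orthonormal
      rw [orthonormal_iff_ite] at this
      exact this j i
    have h3 : HasSum (fun j => ⟪ξ j, ContinuousLinearMap.adjoint Θinv (e i)⟫_ℂ • η j)
        (η i) := by
      have : HasSum (fun j => (if j = i then (1 : ℂ) else 0) • η j) (η i) := by
        convert hasSum_ite_eq i ((1 : ℂ) • η i) using 2 with j
        · split <;> simp_all
        · simp
      simpa only [h2] using this
    exact (h1.unique h3).symm ▸ rfl
  refine ⟨key, S ∘L ContinuousLinearMap.adjoint Θinv,
    ContinuousLinearMap.adjoint Θ ∘L Sinv, ?_, ?_, key⟩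
  · have hadj : ContinuousLinearMap.adjoint Θinv ∘L ContinuousLinearMap.adjoint Θ
        = ContinuousLinearMap.id ℂ H := by
      rw [← ContinuousLinearMap.adjoint_comp, hΘinv₁, ContinuousLinearMap.adjoint_id]
    calc (S ∘L ContinuousLinearMap.adjoint Θinv) ∘L
          (ContinuousLinearMap.adjoint Θ ∘L Sinv)
        = S ∘L ((ContinuousLinearMap.adjoint Θinv ∘L ContinuousLinearMap.adjoint Θ)
            ∘L Sinv) := by
          simp only [ContinuousLinearMap.comp_assoc]
      _ = ContinuousLinearMap.id ℂ H := by rw [hadj, ContinuousLinearMap.id_comp, hSinv₁]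
  · have hadj : ContinuousLinearMap.adjoint Θ ∘L ContinuousLinearMap.adjoint Θinv
        = ContinuousLinearMap.id ℂ H := by
      rw [← ContinuousLinearMap.adjoint_comp, hΘinv₂, ContinuousLinearMap.adjoint_id]
    calc (ContinuousLinearMap.adjoint Θ ∘L Sinv) ∘L
          (S ∘L ContinuousLinearMap.adjoint Θinv)
        = ContinuousLinearMap.adjoint Θ ∘L ((Sinv ∘L S)
            ∘L ContinuousLinearMap.adjoint Θinv) := by
          simp only [ContinuousLinearMap.comp_assoc]
      _ = ContinuousLinearMap.id ℂ H := by rw [hSinv₂, ContinuousLinearMap.id_comp, hadj]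
end

section
/- If sequences {ξᵢ} and {ηᵢ} in H are biorthogonal (⟨ηᵢ, ξⱼ⟩ = δᵢⱼ) and {ξᵢ} is a frame with frame operator S_Ξ, then ∑ᵢ ⟨x, ξᵢ⟩⟨ηᵢ, x⟩ = ‖x‖² for all x ∈ H; that is, ({ξᵢ}, {ηᵢ}) is a Parseval biframe. -/
open scoped InnerProductSpace

/-- If `{ξᵢ}` and `{ηᵢ}` are biorthogonal and `{ξᵢ}` is a frame with frame operator
`S_Ξ` (so that `x = ∑ₖ ⟨x, S_Ξ⁻¹ ξₖ⟩ ξₖ` for all `x`), then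
`∑ᵢ ⟨x, ξᵢ⟩⟨ηᵢ, x⟩ = ‖x‖²` for all `x`, i.e. `({ξᵢ}, {ηᵢ})` is a Parseval biframe. -/
theorem biorthogonal_frame_parseval_biframe
    {H : Type*} [NormedAddCommGroup H] [InnerProductSpace ℂ H] [CompleteSpace H]
    (ξ η : ℕ → H) (S Sinv : H →L[ℂ] H)
    (hS : ∀ x : H, HasSum (fun i => ⟪ξ i, x⟫_ℂ • ξ i) (S x))
    (hSinv₁ : S ∘L Sinv = ContinuousLinearMap.id ℂ H)
    (hSinv₂ : Sinv ∘L S = ContinuousLinearMap.id ℂ H)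
    (hrecon : ∀ x : H, HasSum (fun k => ⟪Sinv (ξ k), x⟫_ℂ • ξ k) x)
    (hbiorth : ∀ i j, ⟪η i, ξ j⟫_ℂ = if i = j then 1 else 0) :
    ∀ x : H, HasSum (fun i => ⟪ξ i, x⟫_ℂ * ⟪x, η i⟫_ℂ) ((‖x‖ ^ 2 : ℝ) : ℂ) := by
  intro x
  -- Step 1: ⟪η i, x⟫ = ⟪Sinv (ξ i), x⟫
  have key : ∀ i, ⟪η i, x⟫_ℂ = ⟪Sinv (ξ i), x⟫_ℂ := by
    intro i
    have h1 : HasSum (fun k => ⟪η i, ⟪Sinv (ξ k), x⟫_ℂ • ξ k⟫_ℂ) ⟪η i, x⟫_ℂ :=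
      (innerSL ℂ (η i)).hasSum (hrecon x)
    have h2 : HasSum (fun k => ⟪η i, ⟪Sinv (ξ k), x⟫_ℂ • ξ k⟫_ℂ) ⟪Sinv (ξ i), x⟫_ℂ := by
      have : ∀ k, ⟪η i, ⟪Sinv (ξ k), x⟫_ℂ • ξ k⟫_ℂ
          = if k = i then ⟪Sinv (ξ i), x⟫_ℂ else 0 := by
        intro k
        rw [inner_smul_right, hbiorth i k]
        by_cases h : k = i
        · simp [h]
        · simp [h, Ne.symm h]
      simp_rw [this]
      exact hasSum_ite_eq i _
    exact h1.unique h2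
  -- Step 2: apply ⟪x, ·⟫ to the reconstruction of x
  have h3 : HasSum (fun k => ⟪Sinv (ξ k), x⟫_ℂ * ⟪x, ξ k⟫_ℂ) ⟪x, x⟫_ℂ := by
    have := (innerSL ℂ x).hasSum (hrecon x)
    simpa [inner_smul_right] using this
  -- Step 3: conjugate
  have h4 : HasSum (fun k => ⟪ξ k, x⟫_ℂ * ⟪x, Sinv (ξ k)⟫_ℂ)
      ((starRingEnd ℂ) ⟪x, x⟫_ℂ) := by
    have := h3.map (starRingEnd ℂ) Complex.continuous_conj
    · convert this using 2 with k
      · simp [map_mul, inner_conj_symm]; ring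
  have h5 : (starRingEnd ℂ) ⟪x, x⟫_ℂ = ((‖x‖ ^ 2 : ℝ) : ℂ) := by
    rw [inner_conj_symm, inner_self_eq_norm_sq_to_K]
    norm_cast
  rw [h5] at h4
  convert h4 using 2 with k
  rw [← inner_conj_symm x (η k), key k, inner_conj_symm]
end
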